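/- arXiv:1410.3703 — 5 statements merged into one kernel-verified Lean document; each statement's English description precedes it below -/
import Mathlib

section
/- Let G be an n'-right regular bipartite graph and T ⊆ V1(G) a k-closed set. Let G_T be the induced subgraph with vertex sets T and V2(G)^T = { u ∈ V2(G) : N(u) ⊆ T } and edge set E(G) ∩ (T × V2(G)^T). Then for every S ⊆ T, cl_G^k(S) = cl_{G_T}^k(S). -/
open Finset

def TStep {V1 V2 : Type*} [DecidableEq V1] (N : V2 → Finset V1) (k n' : ℕ)
    (Z Z' : Finset V1) : Prop :=
  ∃ u : V2, k ≤ (N u ∩ Z).card ∧ (N u ∩ Z).card < n' ∧ Z' = Z ∪ N u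

def TTerminal {V1 V2 : Type*} [DecidableEq V1] (N : V2 → Finset V1) (k n' : ℕ)
    (S Z : Finset V1) : Prop :=
  Relation.ReflTransGen (TStep N k n') S Z ∧ ∀ Z', ¬ TStep N k n' Z Z'

lemma TStep_mono {V1 V2 : Type*} [DecidableEq V1] {N : V2 → Finset V1} {k n' : ℕ}
    {A B : Finset V1} (h : Relation.ReflTransGen (TStep N k n') A B) : A ⊆ B := by
  induction h with
  | refl => exact subset_rfl
  | tail _ hstep ih =>
    obtain ⟨u, _, _, rfl⟩ := hstep
    exact ih.trans Finset.subset_union_left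

lemma nbhd_subset_of_blocked {V1 V2 : Type*} [DecidableEq V1] {N : V2 → Finset V1} {k n' : ℕ}
    {Z : Finset V1} (hcard : ∀ u : V2, (N u).card = n')
    (hblock : ∀ Z', ¬ TStep N k n' Z Z') {u : V2}
    (hku : k ≤ (N u ∩ Z).card) : N u ⊆ Z := by
  have hle : (N u ∩ Z).card ≤ n' := by
    rw [← hcard u]; exact Finset.card_le_card Finset.inter_subset_left
  rcases lt_or_eq_of_le hle with hlt | heq
  · exact absurd ⟨u, hku, hlt, rfl⟩ (hblock (Z ∪ N u))
  · have : N u ∩ Z = N u :=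
      Finset.eq_of_subset_of_card_le Finset.inter_subset_left (by rw [heq, hcard u])
    rw [← this]; exact Finset.inter_subset_right

/-- if `T` is `k`-closed, then for every `S ⊆ T` the `k`-closure of `S` in `G`
coincides with the `k`-closure of `S` in the induced subgraph `G_T`, whose constraint
vertices are `{u ∈ V2 : N(u) ⊆ T}` with the same neighborhoods.  (Stated via terminal sets
of the respective irreversible `k`-threshold processes.) -/
theorem closure_induced_subgraph {V1 V2 : Type*} [Fintype V1] [DecidableEq V1] [Fintype V2]
    (N : V2 → Finset V1) (n' k : ℕ) (hreg : ∀ u : V2, (N u).card = n') (hk : k ≤ n')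
    (T : Finset V1)
    (hTclosed : ∀ u : V2, ¬ (k ≤ (N u ∩ T).card ∧ (N u ∩ T).card < n'))
    (S : Finset V1) (hS : S ⊆ T) (Z Z' : Finset V1)
    (hZ : TTerminal N k n' S Z)
    (hZ' : TTerminal (fun u : {u : V2 // N u ⊆ T} => N u.1) k n' S Z') :
    Z = Z' := by
  obtain ⟨hZr, hZt⟩ := hZ
  obtain ⟨hZ'r, hZ't⟩ := hZ'
  have hreg' : ∀ u : {u : V2 // N u ⊆ T}, ((fun u : {u : V2 // N u ⊆ T} => N u.1) u).card = n' :=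
    fun u => hreg u.1
  apply Finset.Subset.antisymm
  · -- Z ⊆ Z', tracking also ⊆ T
    have key : ∀ X, Relation.ReflTransGen (TStep N k n') S X → X ⊆ T ∧ X ⊆ Z' := by
      intro X hX
      induction hX with
      | refl => exact ⟨hS, TStep_mono hZ'r⟩
      | tail _ hstep ih =>
        obtain ⟨hXT, hXZ'⟩ := ih
        obtain ⟨u, h1, h2, rfl⟩ := hstep
        have hkT : k ≤ (N u ∩ T).card :=
          h1.trans (Finset.card_le_card (Finset.inter_subset_inter subset_rfl hXT))
        have hNuT : N u ⊆ T := by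
          have hle : (N u ∩ T).card ≤ n' := by
            rw [← hreg u]; exact Finset.card_le_card Finset.inter_subset_left
          rcases lt_or_eq_of_le hle with hlt | heq
          · exact absurd ⟨hkT, hlt⟩ (hTclosed u)
          · have : N u ∩ T = N u :=
              Finset.eq_of_subset_of_card_le Finset.inter_subset_left (by rw [heq, hreg u])
            rw [← this]; exact Finset.inter_subset_right
        have hkZ' : k ≤ (N u ∩ Z').card :=
          h1.trans (Finset.card_le_card (Finset.inter_subset_inter subset_rfl hXZ'))
        have hNuZ' : N u ⊆ Z' :=
          nbhd_subset_of_blocked hreg' hZ't (u := ⟨u, hNuT⟩) hkZ'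
        exact ⟨Finset.union_subset hXT hNuT, Finset.union_subset hXZ' hNuZ'⟩
    exact (key Z hZr).2
  · -- Z' ⊆ Z
    have key : ∀ X, Relation.ReflTransGen (TStep (fun u : {u : V2 // N u ⊆ T} => N u.1) k n') S X →
        X ⊆ Z := by
      intro X hX
      induction hX with
      | refl => exact TStep_mono hZr
      | tail _ hstep ih =>
        obtain ⟨u, h1, h2, rfl⟩ := hstep
        have hkZ : k ≤ (N u.1 ∩ Z).card :=
          h1.trans (Finset.card_le_card (Finset.inter_subset_inter subset_rfl ih))
        exact Finset.union_subset ih (nbhd_subset_of_blocked hreg hZt hkZ)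
    exact key Z' hZ'r
end

section
/- Let G be an n'-right regular bipartite graph, C' an MDS code of length n' and dimension k, and C = (G, C') a Tanner code. For any S ⊆ V1(G), the coordinate-projection map from C^{cl_G^k(S)} to C^S is a linear isomorphism. -/
open Finset

/-- `C ≤ F^{V1}` is a Tanner code with component code `C' ≤ F^{N'}` for the bipartite graph
with neighborhoods `N : V2 → Finset V1`: for each constraint vertex `u` there is a code
monomially equivalent to `C'` (encoded by a bijection `e : N(u) ≃ N'` together with nonzero
scalars) containing the projection of `C` onto `N(u)`. -/
def IsTannerCode {V1 V2 N' : Type*} [DecidableEq V1] (F : Type*) [Field F]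
    (N : V2 → Finset V1) (C : Submodule F (V1 → F)) (C' : Submodule F (N' → F)) : Prop :=
  ∀ u : V2, ∃ (e : {v // v ∈ N u} ≃ N') (lam : N' → F), (∀ i, lam i ≠ 0) ∧
    ∀ c ∈ C, (fun i : N' => lam i * c (e.symm i : V1)) ∈ C'

/-- An `[n', k]` MDS code: dimension `k` and every nonzero codeword has weight at least
`n' - k + 1`. -/
def IsMDS {N' : Type*} [Fintype N'] (F : Type*) [Field F] [DecidableEq F]
    (C' : Submodule F (N' → F)) (n' k : ℕ) : Prop :=
  Fintype.card N' = n' ∧ Module.finrank F C' = k ∧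
    ∀ x ∈ C', x ≠ 0 → n' - k + 1 ≤ (Finset.univ.filter fun i => x i ≠ 0).card

/-!
If a codeword vanishes on `k` of the `n'` neighbours of a check vertex, its local view is a
codeword of the MDS code `C'` with at most `n' - k` nonzero entries, hence zero. So the zero set
of a codeword is `k`-closed, and a codeword vanishing on `S` vanishes on `cl_G^k(S)`. By
linearity the restriction `C^{cl(S)} → C^S` is injective; it is onto since both sides are
projections of `C`.
-/

theorem Submodule.exists_linearEquiv_map_funLeft_of_eqOn_zero {V R : Type*} [Ring R]
    (C : Submodule R (V → R)) {S T : Set V} (hST : S ⊆ T)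
    (hC : ∀ c ∈ C, Set.EqOn c 0 S → Set.EqOn c 0 T) :
    ∃ e : C.map (LinearMap.funLeft R R (Subtype.val : T → V)) ≃ₗ[R]
          C.map (LinearMap.funLeft R R (Subtype.val : S → V)),
      ∀ x (v : S) (hv : (v : V) ∈ T), (e x : S → R) v = (x : T → R) ⟨v, hv⟩ := by
  set r := LinearMap.funLeft R R (Set.inclusion hST)
  have hmaps : ∀ x ∈ C.map (LinearMap.funLeft R R (Subtype.val : T → V)),
      r x ∈ C.map (LinearMap.funLeft R R (Subtype.val : S → V)) := by
    rintro _ ⟨c, hc, rfl⟩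
    exact ⟨c, hc, rfl⟩
  have hinj : Function.Injective (r.restrict hmaps) := by
    rintro ⟨_, c, hc, rfl⟩ ⟨_, d, hd, rfl⟩ hcd
    have hS : Set.EqOn (c - d) 0 S := fun v hv =>
      sub_eq_zero.mpr (congrFun (congrArg Subtype.val hcd) ⟨v, hv⟩)
    ext v
    exact sub_eq_zero.mp (hC _ (C.sub_mem hc hd) hS v.2)
  have hsurj : Function.Surjective (r.restrict hmaps) := by
    rintro ⟨_, c, hc, rfl⟩
    exact ⟨⟨_, c, hc, rfl⟩, rfl⟩
  exact ⟨LinearEquiv.ofBijective _ ⟨hinj, hsurj⟩, fun _ _ _ => rfl⟩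

theorem TStep.subset {V1 V2 : Type*} [DecidableEq V1] {N : V2 → Finset V1} {k n' : ℕ}
    {Z Z' : Finset V1} (h : TStep N k n' Z Z') : Z ⊆ Z' := by
  obtain ⟨u, -, -, rfl⟩ := h
  exact subset_union_left

theorem TStep.subset_of_reflTransGen {V1 V2 : Type*} [DecidableEq V1] {N : V2 → Finset V1}
    {k n' : ℕ} {S T : Finset V1} (h : Relation.ReflTransGen (TStep N k n') S T) : S ⊆ T := by
  induction h with
  | refl => exact subset_rfl
  | tail _ hstep ih => exact ih.trans hstep.subset

theorem IsMDS.eq_zero_of_le_card_zeros {N' F : Type*} [Fintype N'] [Field F] [DecidableEq F]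
    {C' : Submodule F (N' → F)} {n' k : ℕ} (hMDS : IsMDS F C' n' k) {x : N' → F}
    (hx : x ∈ C') (hzeros : k ≤ #{i | x i = 0}) : x = 0 := by
  by_contra hne
  have hweight := hMDS.2.2 x hx hne
  simp only [ne_eq] at hweight
  have hsplit := card_filter_add_card_filter_not (s := univ) (fun i => x i = 0)
  rw [card_univ, hMDS.1] at hsplit
  omega

theorem IsTannerCode.eqOn_zero_neighbors {V1 V2 N' F : Type*} [DecidableEq V1] [Fintype N']
    [Field F] [DecidableEq F] {N : V2 → Finset V1} {n' k : ℕ} {C' : Submodule F (N' → F)}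
    {C : Submodule F (V1 → F)} (hTan : IsTannerCode F N C C') (hMDS : IsMDS F C' n' k)
    {c : V1 → F} (hc : c ∈ C) {Z : Finset V1} (hZ : Set.EqOn c 0 Z) {u : V2}
    (hu : k ≤ #(N u ∩ Z)) : Set.EqOn c 0 (N u) := by
  obtain ⟨e, lam, hlam, hC'⟩ := hTan u
  set w : N' → F := fun i => lam i * c (e.symm i)
  have hzeros : #(N u ∩ Z) ≤ #{i | w i = 0} := by
    refine card_le_card_of_surjOn (fun i => (e.symm i : V1)) fun v hv => ?_
    obtain ⟨hvN, hvZ⟩ := mem_inter.mp hv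
    refine ⟨e ⟨v, hvN⟩, ?_, by simp⟩
    simp [w, hZ hvZ]
  have hw : w = 0 := hMDS.eq_zero_of_le_card_zeros (hC' c hc) (hu.trans hzeros)
  intro v hv
  have hwv := congrFun hw (e ⟨v, hv⟩)
  simp only [w, Equiv.symm_apply_apply, Pi.zero_apply] at hwv
  exact (mul_eq_zero.mp hwv).resolve_left (hlam _)

theorem IsTannerCode.eqOn_zero_of_reflTransGen {V1 V2 N' F : Type*} [DecidableEq V1]
    [Fintype N'] [Field F] [DecidableEq F] {N : V2 → Finset V1} {n' k : ℕ}
    {C' : Submodule F (N' → F)} {C : Submodule F (V1 → F)} (hTan : IsTannerCode F N C C')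
    (hMDS : IsMDS F C' n' k) {S T : Finset V1} (hST : Relation.ReflTransGen (TStep N k n') S T)
    {c : V1 → F} (hc : c ∈ C) (hS : Set.EqOn c 0 S) : Set.EqOn c 0 T := by
  induction hST with
  | refl => exact hS
  | tail _ hstep ih =>
    obtain ⟨u, hu, -, rfl⟩ := hstep
    rw [coe_union]
    exact ih.union (hTan.eqOn_zero_neighbors hMDS hc ih hu)

theorem projection_closure_isomorphism_general {V1 V2 N' : Type*} [DecidableEq V1]
    [Fintype N'] (F : Type*) [Field F] [DecidableEq F]
    (N : V2 → Finset V1) (n' k : ℕ)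
    (C' : Submodule F (N' → F)) (hMDS : IsMDS F C' n' k)
    (C : Submodule F (V1 → F)) (hTan : IsTannerCode F N C C')
    (S T : Finset V1) (hT : TTerminal N k n' S T) :
    ∃ e : (C.map (LinearMap.funLeft F F (fun v : {v // v ∈ T} => (v : V1)))) ≃ₗ[F]
          (C.map (LinearMap.funLeft F F (fun v : {v // v ∈ S} => (v : V1)))),
      ∀ (x : C.map (LinearMap.funLeft F F (fun v : {v // v ∈ T} => (v : V1))))
        (v : {v // v ∈ S}) (hv : (v : V1) ∈ T),
        (e x : {v // v ∈ S} → F) v = (x : {v // v ∈ T} → F) ⟨v, hv⟩ :=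
  C.exists_linearEquiv_map_funLeft_of_eqOn_zero (S := S) (T := T)
    (coe_subset.mpr (TStep.subset_of_reflTransGen hT.1))
    fun _ hc => hTan.eqOn_zero_of_reflTransGen hMDS hT.1 hc

/-- for a Tanner code `C = (G, C')` with `C'` an `[n',k]` MDS code, and any
`S ⊆ V1(G)` with `k`-closure `T = cl_G^k(S)`, the coordinate projection from `C^T` to `C^S`
is a linear isomorphism. -/
theorem projection_closure_isomorphism {V1 V2 N' : Type*} [Fintype V1] [DecidableEq V1]
    [Fintype V2] [Fintype N'] (F : Type*) [Field F] [Fintype F] [DecidableEq F]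
    (N : V2 → Finset V1) (n' k : ℕ) (hreg : ∀ u : V2, (N u).card = n') (hk : k ≤ n')
    (C' : Submodule F (N' → F)) (hMDS : IsMDS F C' n' k)
    (C : Submodule F (V1 → F)) (hTan : IsTannerCode F N C C')
    (S T : Finset V1) (hT : TTerminal N k n' S T) :
    ∃ e : (C.map (LinearMap.funLeft F F (fun v : {v // v ∈ T} => (v : V1)))) ≃ₗ[F]
          (C.map (LinearMap.funLeft F F (fun v : {v // v ∈ S} => (v : V1)))),
      ∀ (x : C.map (LinearMap.funLeft F F (fun v : {v // v ∈ T} => (v : V1))))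
        (v : {v // v ∈ S}) (hv : (v : V1) ∈ T),
        (e x : {v // v ∈ S} → F) v = (x : {v // v ∈ T} → F) ⟨v, hv⟩ :=
  projection_closure_isomorphism_general F N n' k C' hMDS C hTan S T hT
end

section
/- Let G be an n'-right regular bipartite graph, C' an MDS code of length n' and dimension k, and C = (G, C') a Tanner code. If S ⊆ V1(G) is a k-forcing set for G (i.e., cl_G^k(S) = V1(G)), then dim C ≤ #S. -/
open Finset

/-- for a Tanner code `C = (G,C')` with `C'` an `[n',k]` MDS code, if `S` is a
`k`-forcing set for `G` (its `k`-closure is all of `V1(G)`), then `dim C ≤ #S`. -/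
theorem dim_le_card_forcing {V1 V2 N' : Type*} [Fintype V1] [DecidableEq V1]
    [Fintype V2] [Fintype N'] (F : Type*) [Field F] [Fintype F] [DecidableEq F]
    (N : V2 → Finset V1) (n' k : ℕ) (hreg : ∀ u : V2, (N u).card = n') (hk : k ≤ n')
    (C' : Submodule F (N' → F)) (hMDS : IsMDS F C' n' k)
    (C : Submodule F (V1 → F)) (hTan : IsTannerCode F N C C')
    (S : Finset V1) (hforce : TTerminal N k n' S Finset.univ) :
    Module.finrank F C ≤ S.card := by
  classical
  obtain ⟨hreach, -⟩ := hforce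
  have key : ∀ c ∈ C, (∀ v ∈ S, c v = 0) → c = 0 := by
    intro c hc hS
    have main : ∀ Z : Finset V1, Relation.ReflTransGen (TStep N k n') S Z →
        ∀ w ∈ Z, c w = 0 := by
      intro Z hZ
      induction hZ with
      | refl => exact hS
      | @tail Y Z2 h1 h2 ih =>
        obtain ⟨u, hku, hlt, rfl⟩ := h2
        intro w hw
        rcases Finset.mem_union.mp hw with h | h
        · exact ih w h
        · obtain ⟨e, lam, hlam, hmem⟩ := hTan u
          set x : N' → F := fun i => lam i * c (e.symm i : V1) with hxdef
          have hx : x ∈ C' := hmem c hc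
          have hx0 : x = 0 := by
            by_contra hne
            have hwt := hMDS.2.2 x hx hne
            -- the zeros of x include the image of N u ∩ Z under e
            have hsub : ((N u ∩ Y).attach.image
                (fun v => e ⟨v.1, (Finset.mem_inter.mp v.2).1⟩)) ⊆
                Finset.univ.filter (fun i => x i = 0) := by
              intro i hi
              obtain ⟨v, -, hv⟩ := Finset.mem_image.mp hi
              have hcz : c v.1 = 0 := ih v.1 (Finset.mem_inter.mp v.2).2
              simp only [Finset.mem_filter, Finset.mem_univ, true_and, hxdef]
              subst hv
              simp [hcz]
            have hcardim : ((N u ∩ Y).attach.image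
                (fun v => e ⟨v.1, (Finset.mem_inter.mp v.2).1⟩)).card
                = (N u ∩ Y).card := by
              rw [Finset.card_image_of_injective _ ?_, Finset.card_attach]
              intro a b hab
              have h3 : (a : V1) = (b : V1) := congrArg (Subtype.val : {v // v ∈ N u} → V1) (e.injective hab)
              exact Subtype.ext h3
            have hzeros : k ≤ (Finset.univ.filter (fun i => x i = 0)).card := by
              calc k ≤ (N u ∩ Y).card := hku
                _ = _ := hcardim.symm
                _ ≤ _ := Finset.card_le_card hsub
            have hsum : (Finset.univ.filter (fun i => x i = 0)).card
                + (Finset.univ.filter (fun i => ¬ x i = 0)).card = n' := by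
              rw [Finset.card_filter_add_card_filter_not]
              exact hMDS.1
            have : (Finset.univ.filter (fun i => x i ≠ 0)).card
                = (Finset.univ.filter (fun i => ¬ x i = 0)).card := rfl
            omega
          have hcol := congrFun hx0 (e ⟨w, h⟩)
          simp only [hxdef, Equiv.symm_apply_apply, Pi.zero_apply] at hcol
          rcases mul_eq_zero.mp hcol with h0 | h0
          · exact absurd h0 (hlam _)
          · exact h0
    funext v
    exact main Finset.univ hreach v (Finset.mem_univ v)
  -- restriction to S is injective
  let f : C →ₗ[F] ({v // v ∈ S} → F) :=
    { toFun := fun c s => (c : V1 → F) s.1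
      map_add' := fun a b => rfl
      map_smul' := fun m a => rfl }
  have hinj : Function.Injective f := by
    rw [injective_iff_map_eq_zero]
    intro c hc0
    have : (c : V1 → F) = 0 := key c.1 c.2 (fun v hv => congrFun hc0 ⟨v, hv⟩)
    exact Subtype.ext this
  have := LinearMap.finrank_le_finrank_of_injective hinj
  simpa [Module.finrank_pi, Fintype.card_coe] using this
end

section
/- Let c be a codeword of the Grassmann code C(ℓ,m) and let Y = supp(c) ⊆ G(ℓ,m). Then every line of the Grassmannian meets Y in exactly 0 or exactly q points. -/
open Finset Module

/-- The row space of an `ℓ × m` matrix. -/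
def rowSpan (F : Type*) [Field F] {l m : ℕ} (M : Matrix (Fin l) (Fin m) F) :
    Submodule F (Fin m → F) :=
  Submodule.span F (Set.range fun i : Fin l => M i)

/-- The Plücker coordinate of an `ℓ × m` matrix at an `ℓ`-subset `I` of the columns:
the `ℓ × ℓ` minor on the columns of `I` (taken in increasing order). -/
def plucker (F : Type*) [Field F] {l m : ℕ} (M : Matrix (Fin l) (Fin m) F)
    (I : {s : Finset (Fin m) // s.card = l}) : F :=
  (M.submatrix id fun j : Fin l => ((I.1.orderIsoOfFin I.2 j : Fin m))).det

/-- A line of the Grassmannian `G(ℓ, m)` over `F`: the set of `ℓ`-dimensional subspaces `W`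
with `Z ≤ W ≤ Z'` for some nested subspaces `Z` of dimension `ℓ-1` and `Z'` of dimension
`ℓ+1`. -/
def IsGrLine (F : Type*) [Field F] (l m : ℕ) (L : Set (Submodule F (Fin m → F))) : Prop :=
  ∃ Z Z' : Submodule F (Fin m → F), finrank F Z = l - 1 ∧ finrank F Z' = l + 1 ∧ Z ≤ Z' ∧
    L = {W : Submodule F (Fin m → F) | finrank F W = l ∧ Z ≤ W ∧ W ≤ Z'}

/-- The support of the codeword of the Grassmann code `C(ℓ,m)` given by the coefficient
vector `a` of a linear combination of Plücker coordinates, where `M` assigns to each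
subspace a representative matrix: the set of `ℓ`-dimensional subspaces where the
evaluation is nonzero. -/
def grSupport (F : Type*) [Field F] {l m : ℕ}
    (M : Submodule F (Fin m → F) → Matrix (Fin l) (Fin m) F)
    (a : {s : Finset (Fin m) // s.card = l} → F) : Set (Submodule F (Fin m → F)) :=
  {W | finrank F W = l ∧ ∑ I : {s : Finset (Fin m) // s.card = l}, a I * plucker F (M W) I ≠ 0}

/-!
The line through `Z ⊂ Z'` is the pencil of subspaces `Z ⊔ ⟨v⟩`, where `[v]` runs over the `q + 1`
points of the projective line spanned by two vectors `u, u'` that are independent modulo `Z`.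
If the rows of `z` span `Z`, the matrix `(z; v)` represents `Z ⊔ ⟨v⟩`; as any two representatives
differ by an invertible factor, the codeword is nonzero at `Z ⊔ ⟨v⟩` iff `ψ v ≠ 0`, where
`ψ v = Σ_I a_I det_I (z; v)` is linear in `v`. A linear form on the plane `⟨u, u'⟩` is either zero
or vanishes at exactly one point of its projective line.
-/

section ProjectiveLine

variable {F V W : Type*} [Field F] [AddCommGroup V] [Module F V] [AddCommGroup W] [Module F W]

/-- `Option F` plays the projective line `F ∪ {∞}` spanned by `u, u'`: `some x ↦ u + x • u'`
and `none ↦ u'`. -/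
def projLinePt (u u' : V) : Option F → V
  | none => u'
  | some x => u + x • u'

lemma map_projLinePt (f : V →ₗ[F] W) (u u' : V) (o : Option F) :
    f (projLinePt u u' o) = projLinePt (f u) (f u') o := by
  cases o <;> simp [projLinePt]

variable {u u' : V}

lemma projLinePt_ne_zero (h : LinearIndependent F ![u, u']) (o : Option F) :
    projLinePt u u' o ≠ 0 := by
  cases o with
  | none => simpa [projLinePt] using h.ne_zero 1
  | some x =>
    intro h0
    exact one_ne_zero (LinearIndependent.pair_iff.mp h 1 x (by simpa [projLinePt] using h0)).1

lemma span_projLinePt_injective (h : LinearIndependent F ![u, u']) :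
    Function.Injective fun o : Option F => F ∙ projLinePt u u' o := by
  have hcoef := LinearIndependent.pair_iff.mp h
  intro o₁ o₂ heq
  obtain ⟨c, hc⟩ := Submodule.span_singleton_eq_span_singleton.mp heq
  rw [Units.smul_def] at hc
  cases o₁ with
  | none => cases o₂ with
    | none => rfl
    | some y =>
      simp only [projLinePt] at hc
      exact absurd (hcoef 1 (y - c) (by linear_combination (norm := module) -hc)).1 one_ne_zero
  | some x => cases o₂ with
    | none =>
      simp only [projLinePt] at hc
      have := hcoef c (c * x - 1) (by linear_combination (norm := module) hc)
      exact absurd this.1 c.ne_zero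
    | some y =>
      simp only [projLinePt] at hc
      obtain ⟨h1, h2⟩ := hcoef (c - 1) (c * x - y) (by linear_combination (norm := module) hc)
      rw [sub_eq_zero.mp h1, one_mul, sub_eq_zero] at h2
      rw [h2]

lemma exists_span_projLinePt_eq {w : V} (hw : w ∈ Submodule.span F {u, u'}) (hw0 : w ≠ 0) :
    ∃ o : Option F, F ∙ w = F ∙ projLinePt u u' o := by
  obtain ⟨a, b, rfl⟩ := Submodule.mem_span_pair.mp hw
  rcases eq_or_ne a 0 with rfl | ha
  · have hb : b ≠ 0 := by rintro rfl; simp at hw0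
    exact ⟨none, by simpa [projLinePt] using Submodule.span_singleton_smul_eq (IsUnit.mk0 b hb) u'⟩
  · refine ⟨some (b / a), ?_⟩
    rw [← Submodule.span_singleton_smul_eq (IsUnit.mk0 a ha) (projLinePt u u' _)]
    simp [projLinePt, smul_add, smul_smul, mul_div_cancel₀ _ ha]

lemma ncard_setOf_projLinePt_ne_zero [Fintype F] (ψ : V →ₗ[F] F) (u u' : V) :
    {o : Option F | ψ (projLinePt u u' o) ≠ 0}.ncard = 0 ∨
      {o : Option F | ψ (projLinePt u u' o) ≠ 0}.ncard = Fintype.card F := by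
  have hcompl (o₀ : Option F) : ({o₀}ᶜ : Set (Option F)).ncard = Fintype.card F := by
    rw [Set.ncard_compl, Set.ncard_singleton, Nat.card_eq_fintype_card, Fintype.card_option,
      Nat.add_sub_cancel]
  rcases eq_or_ne (ψ u') 0 with hB | hB
  · rcases eq_or_ne (ψ u) 0 with hA | hA
    · left
      convert Set.ncard_empty (Option F)
      ext (_ | x) <;> simp [projLinePt, hA, hB]
    · right
      convert hcompl none
      ext (_ | x) <;> simp [projLinePt, hA, hB]
  · right
    convert hcompl (some (-ψ u / ψ u'))
    ext (_ | x)
    · simp [projLinePt, hB]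
    · simp [projLinePt, eq_div_iff hB, eq_neg_iff_add_eq_zero, add_comm]

end ProjectiveLine

section Pencil

variable {F V : Type*} [Field F] [AddCommGroup V] [Module F V]

def pencil (Z : Submodule F V) (u u' : V) (o : Option F) : Submodule F V :=
  Z ⊔ F ∙ projLinePt u u' o

lemma sup_span_singleton_eq_comap_mkQ (Z : Submodule F V) (v : V) :
    Z ⊔ F ∙ v = (F ∙ Z.mkQ v).comap Z.mkQ := by
  rw [← Set.image_singleton, Submodule.span_image, Submodule.comap_map_mkQ]

lemma Submodule.exists_span_range_eq_of_finrank_eq [FiniteDimensional F V] {Z : Submodule F V}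
    {k : ℕ} (h : finrank F Z = k) : ∃ z : Fin k → V, span F (Set.range z) = Z := by
  let b := Module.finBasisOfFinrankEq F Z h
  refine ⟨Z.subtype ∘ b, ?_⟩
  rw [Set.range_comp, Submodule.span_image, b.span_eq, Submodule.map_top, Submodule.range_subtype]

lemma exists_linearIndependent_mkQ_pair [FiniteDimensional F V] {Z Z' : Submodule F V}
    (hZZ' : Z ≤ Z') (h : finrank F Z' = finrank F Z + 2) :
    ∃ u u' : V, LinearIndependent F ![Z.mkQ u, Z.mkQ u'] ∧ Z ⊔ Submodule.span F {u, u'} = Z' := by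
  obtain ⟨u', hu'Z', hu'Z⟩ :=
    SetLike.exists_of_lt (Submodule.lt_of_le_of_finrank_lt_finrank hZZ' (by omega))
  have hZu' : Z ⊔ F ∙ u' ≤ Z' := sup_le hZZ' ((Submodule.span_singleton_le_iff_mem _ _).mpr hu'Z')
  have hrank := Submodule.finrank_sup_span_singleton hu'Z
  obtain ⟨u, huZ', huZ⟩ :=
    SetLike.exists_of_lt (Submodule.lt_of_le_of_finrank_lt_finrank hZu' (by omega))
  refine ⟨u, u', linearIndependent_fin2.mpr ⟨?_, fun a ha => huZ ?_⟩, ?_⟩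
  · simpa [Submodule.Quotient.mk_eq_zero] using hu'Z
  · have hmem : u - a • u' ∈ Z := by
      rw [← Submodule.Quotient.mk_eq_zero]
      simpa [sub_eq_zero] using ha.symm
    simpa using Submodule.add_mem _ (Submodule.mem_sup_left hmem)
      (Submodule.mem_sup_right (Submodule.smul_mem _ a (Submodule.mem_span_singleton_self u')))
  · rw [Submodule.span_insert, sup_comm (F ∙ u), ← sup_assoc]
    refine Submodule.eq_of_le_of_finrank_eq
      (sup_le hZu' ((Submodule.span_singleton_le_iff_mem _ _).mpr huZ')) ?_
    rw [Submodule.finrank_sup_span_singleton huZ, hrank, h]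

variable {Z : Submodule F V} {u u' : V}

lemma pencil_eq_comap (o : Option F) :
    pencil Z u u' o = (F ∙ projLinePt (Z.mkQ u) (Z.mkQ u') o).comap Z.mkQ := by
  rw [pencil, sup_span_singleton_eq_comap_mkQ, map_projLinePt]

lemma pencil_injective (h : LinearIndependent F ![Z.mkQ u, Z.mkQ u']) :
    Function.Injective (pencil Z u u') := by
  intro o₁ o₂ heq
  simp only [pencil_eq_comap] at heq
  exact span_projLinePt_injective h (Submodule.comap_injective_of_surjective Z.mkQ_surjective heq)

lemma range_pencil [FiniteDimensional F V] (h : LinearIndependent F ![Z.mkQ u, Z.mkQ u']) :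
    Set.range (pencil Z u u') =
      {W : Submodule F V |
        finrank F W = finrank F Z + 1 ∧ Z ≤ W ∧ W ≤ Z ⊔ Submodule.span F {u, u'}} := by
  ext W
  constructor
  · rintro ⟨o, rfl⟩
    have hZ : projLinePt u u' o ∉ Z := by
      rw [← Submodule.Quotient.mk_eq_zero, ← Submodule.mkQ_apply, map_projLinePt]
      exact projLinePt_ne_zero h o
    refine ⟨Submodule.finrank_sup_span_singleton hZ, le_sup_left, sup_le_sup_left ?_ _⟩
    rw [Submodule.span_singleton_le_iff_mem]
    cases o <;> simp only [projLinePt, Submodule.mem_span_pair]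
    exacts [⟨0, 1, by simp⟩, ⟨1, _, by rw [one_smul]⟩]
  · rintro ⟨hW, hZW, hWZ'⟩
    obtain ⟨w, hwW, hwZ⟩ := SetLike.exists_of_lt
      (Submodule.lt_of_le_of_finrank_lt_finrank hZW (by omega))
    have hW : Z ⊔ F ∙ w = W := Submodule.eq_of_le_of_finrank_eq
      (sup_le hZW ((Submodule.span_singleton_le_iff_mem _ _).mpr hwW))
      (by rw [Submodule.finrank_sup_span_singleton hwZ, hW])
    have hw : Z.mkQ w ∈ Submodule.span F {Z.mkQ u, Z.mkQ u'} := by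
      rw [← Set.image_pair, Submodule.span_image, ← bot_sup_eq (Submodule.map _ _),
        ← Submodule.mkQ_map_self Z, ← Submodule.map_sup]
      exact Submodule.mem_map_of_mem (hWZ' hwW)
    have hw0 : Z.mkQ w ≠ 0 := by rwa [Submodule.mkQ_apply, Ne, Submodule.Quotient.mk_eq_zero]
    obtain ⟨o, ho⟩ := exists_span_projLinePt_eq hw hw0
    exact ⟨o, by rw [pencil_eq_comap, ← ho, ← sup_span_singleton_eq_comap_mkQ, hW]⟩

end Pencil

section Plucker

variable {F : Type*} [Field F] {l m : ℕ}

lemma plucker_mul (C : Matrix (Fin l) (Fin l) F) (N : Matrix (Fin l) (Fin m) F)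
    (I : {s : Finset (Fin m) // s.card = l}) :
    plucker F (C * N) I = C.det * plucker F N I := by
  rw [plucker, plucker, ← Matrix.det_mul]
  rfl

lemma exists_eq_mul_of_rowSpan_le {P Q : Matrix (Fin l) (Fin m) F}
    (h : rowSpan F Q ≤ rowSpan F P) : ∃ C : Matrix (Fin l) (Fin l) F, Q = C * P := by
  choose c hc using fun i =>
    (Submodule.mem_span_range_iff_exists_fun F).mp (h (Submodule.subset_span ⟨i, rfl⟩))
  refine ⟨Matrix.of c, ?_⟩
  ext i j
  simp [Matrix.mul_apply, ← hc i, Finset.sum_apply]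

lemma exists_plucker_eq_mul_of_rowSpan_le {P Q : Matrix (Fin l) (Fin m) F}
    (h : rowSpan F Q ≤ rowSpan F P) (hQ : finrank F (rowSpan F Q) = l) :
    ∃ c : F, c ≠ 0 ∧ ∀ I, plucker F Q I = c * plucker F P I := by
  obtain ⟨C, rfl⟩ := exists_eq_mul_of_rowSpan_le h
  have hC : C.rank = l := le_antisymm (by simpa using C.rank_le_card_height) <| calc
    l = (C * P).rank := by rw [Matrix.rank_eq_finrank_span_row]; exact hQ.symm
    _ ≤ C.rank := Matrix.rank_mul_le_left C P
  have hCrows : LinearIndependent F C.row := by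
    rw [linearIndependent_iff_card_eq_finrank_span, Set.finrank, ← Matrix.rank_eq_finrank_span_row,
      hC, Fintype.card_fin]
  refine ⟨C.det, ?_, plucker_mul C P⟩
  exact (Matrix.isUnit_iff_isUnit_det C).mp (Matrix.linearIndependent_rows_iff_isUnit.mp hCrows)
    |>.ne_zero

def grassmannForm (a : {s : Finset (Fin m) // s.card = l} → F) :
    MultilinearMap F (fun _ : Fin l => Fin m → F) F :=
  ∑ I, a I • (Matrix.detRowAlternating.compLinearMap
    (LinearMap.funLeft F F fun j => (I.1.orderIsoOfFin I.2 j : Fin m))).toMultilinearMap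

lemma grassmannForm_apply (a : {s : Finset (Fin m) // s.card = l} → F)
    (N : Matrix (Fin l) (Fin m) F) : grassmannForm a N = ∑ I, a I * plucker F N I :=
  (_root_.sum_apply _ _ _).trans rfl

lemma mem_grSupport_iff_of_rowSpan_eq {M : Submodule F (Fin m → F) → Matrix (Fin l) (Fin m) F}
    (hM : ∀ W : Submodule F (Fin m → F), finrank F W = l → rowSpan F (M W) = W)
    (a : {s : Finset (Fin m) // s.card = l} → F) {W : Submodule F (Fin m → F)}
    (hW : finrank F W = l) {N : Matrix (Fin l) (Fin m) F} (hN : rowSpan F N = W) :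
    W ∈ grSupport F M a ↔ grassmannForm a N ≠ 0 := by
  obtain ⟨c, hc, hNM⟩ := exists_plucker_eq_mul_of_rowSpan_le (hN.trans (hM W hW).symm).le (hN ▸ hW)
  have hform : grassmannForm a N = c * grassmannForm a (M W) := by
    simp only [grassmannForm_apply, hNM, Finset.mul_sum, mul_left_comm]
  rw [hform, mul_ne_zero_iff, grassmannForm_apply]
  simp [grSupport, hW, hc]

lemma rowSpan_of_snoc {k : ℕ} (z : Fin k → Fin m → F) (v : Fin m → F) :
    rowSpan F (Matrix.of (Fin.snoc z v)) = Submodule.span F (Set.range z) ⊔ F ∙ v := by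
  rw [rowSpan, sup_comm, ← Submodule.span_insert, ← Fin.range_snoc]
  rfl

end Plucker

theorem line_meets_support_general (F : Type*) [Field F] [Fintype F] {l m : ℕ}
    (hl : 1 ≤ l)
    (M : Submodule F (Fin m → F) → Matrix (Fin l) (Fin m) F)
    (hM : ∀ W : Submodule F (Fin m → F), finrank F W = l → rowSpan F (M W) = W)
    (a : {s : Finset (Fin m) // s.card = l} → F)
    (L : Set (Submodule F (Fin m → F))) (hL : IsGrLine F l m L) :
    (grSupport F M a ∩ L).ncard = 0 ∨ (grSupport F M a ∩ L).ncard = Fintype.card F := by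
  obtain ⟨k, rfl⟩ : ∃ k, l = k + 1 := ⟨l - 1, by omega⟩
  obtain ⟨Z, Z', hZ, hZ', hZZ', rfl⟩ := hL
  rw [Nat.add_sub_cancel] at hZ
  obtain ⟨u, u', hind, rfl⟩ := exists_linearIndependent_mkQ_pair hZZ' (by omega)
  obtain ⟨z, hz⟩ := Submodule.exists_span_range_eq_of_finrank_eq hZ
  let ψ := (grassmannForm a).toLinearMap (Fin.snoc z 0) (Fin.last k)
  have hline := range_pencil hind
  rw [hZ] at hline
  have hsupp : pencil Z u u' ⁻¹' grSupport F M a = {o | ψ (projLinePt u u' o) ≠ 0} := by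
    ext o
    have hrow : rowSpan F (Matrix.of (Fin.snoc z (projLinePt u u' o))) = pencil Z u u' o := by
      rw [rowSpan_of_snoc, hz, pencil]
    rw [Set.mem_preimage, mem_grSupport_iff_of_rowSpan_eq hM a (hline.subset ⟨o, rfl⟩).1 hrow]
    simp only [ψ, MultilinearMap.toLinearMap_apply, Fin.update_snoc_last]
    rfl
  rw [← hline, Set.inter_comm, ← Set.image_preimage_eq_range_inter, hsupp,
    Set.ncard_image_of_injective _ (pencil_injective hind)]
  exact ncard_setOf_projLinePt_ne_zero ψ u u'

/-- every line of the Grassmannian meets the support of a codeword of the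
Grassmann code `C(ℓ,m)` in exactly `0` or exactly `q` points. -/
theorem line_meets_support (F : Type*) [Field F] [Fintype F] {l m : ℕ}
    (hl : 1 ≤ l) (hm : l ≤ m)
    (M : Submodule F (Fin m → F) → Matrix (Fin l) (Fin m) F)
    (hM : ∀ W : Submodule F (Fin m → F), finrank F W = l → rowSpan F (M W) = W)
    (a : {s : Finset (Fin m) // s.card = l} → F)
    (L : Set (Submodule F (Fin m → F))) (hL : IsGrLine F l m L) :
    (grSupport F M a ∩ L).ncard = 0 ∨ (grSupport F M a ∩ L).ncard = Fintype.card F :=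
  line_meets_support_general F hl M hM a L hL
end

section
/- Let c be a nonzero codeword of the Grassmann code C(ℓ,m) and let Y = supp(c). For every T ∈ G(ℓ+1,m), the top clique ⟨T] = { W ∈ G(ℓ,m) : W ⊆ T } meets Y in exactly 0 or exactly q^ℓ points. -/
open Finset Module

/-!
Fix a matrix `B` whose rows are a basis of `T`. Every `ℓ`-subspace `W ≤ T` is the image
`{x B : v ⬝ᵥ x = 0}` of a hyperplane of `F^{ℓ+1}`, for a vector `v` unique up to a nonzero scalar.
Writing `M W = C B`, we have `C v = 0`, and then `(u ⬝ᵥ v) det (C X) = det [u; C] · det [v; Xᵀ]`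
for every `u` and every `(ℓ+1) × ℓ` column submatrix `X` of `B`. Hence the codeword vanishes
at `W` iff `L v = 0` for one linear form `L` on `F^{ℓ+1}` that depends only on `B` and `a`.
Normalising `v` by `L v = 1` identifies the support inside `⟨T]` with the affine hyperplane
`{L = 1}`, which is empty when `L = 0` and has `q^ℓ` points otherwise.
-/

theorem Module.Dual.exists_eq_smul_of_ker_le {K V : Type*} [Field K] [AddCommGroup V]
    [Module K V] {f g : Module.Dual K V} (h : LinearMap.ker f ≤ LinearMap.ker g) :
    ∃ c : K, g = c • f := by
  have hg : g ∈ Submodule.span K (Set.range fun _ : Unit => f) :=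
    mem_span_of_iInf_ker_le_ker (by simpa using h)
  rw [Set.range_const, Submodule.mem_span_singleton] at hg
  obtain ⟨c, hc⟩ := hg
  exact ⟨c, hc.symm⟩

theorem Module.Dual.ncard_setOf_apply_eq_one {K V : Type*} [Field K] [Fintype K]
    [AddCommGroup V] [Module K V] [Module.Finite K V] {n : ℕ} (hV : finrank K V = n + 1)
    {f : Module.Dual K V} (hf : f ≠ 0) : {v | f v = 1}.ncard = Fintype.card K ^ n := by
  obtain ⟨x, hx⟩ := f.surjective hf 1
  have hfiber : {v | f v = 1} = (x + ·) '' (LinearMap.ker f : Set V) := by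
    ext v
    simp only [Set.mem_ofPred_eq, Set.image_add_left, Set.mem_preimage, SetLike.mem_coe,
      LinearMap.mem_ker, map_add, map_neg, hx]
    rw [neg_add_eq_zero, eq_comm]
  have hker : finrank K (LinearMap.ker f) = n := by
    have := f.finrank_ker_add_one_of_ne_zero hf
    omega
  rw [hfiber, Set.ncard_image_of_injective _ (add_right_injective x), ← Nat.card_coe_set_eq,
    SetLike.coe_sort_coe, Module.natCard_eq_pow_finrank (K := K), hker, Nat.card_eq_fintype_card]

theorem finrank_ker_dotProductEquiv_add_one {K ι : Type*} [Field K] [Fintype ι] [DecidableEq ι]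
    {v : ι → K} (hv : v ≠ 0) :
    finrank K (LinearMap.ker (dotProductEquiv K ι v)) + 1 = Fintype.card ι := by
  rw [Module.Dual.finrank_ker_add_one_of_ne_zero, finrank_fintype_fun_eq_card]
  exact (map_ne_zero_iff _ (dotProductEquiv K ι).injective).mpr hv

namespace Matrix

section CommRing

variable {R : Type*} [CommRing R] {n : ℕ}

noncomputable def detConsRow (A : Matrix (Fin n) (Fin (n + 1)) R) : (Fin (n + 1) → R) →ₗ[R] R :=
  (detRowAlternating : (Fin (n + 1) → R) [⋀^Fin (n + 1)]→ₗ[R] R).toMultilinearMap.toLinearMap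
    (vecCons 0 A) 0

theorem detConsRow_apply (A : Matrix (Fin n) (Fin (n + 1)) R) (v : Fin (n + 1) → R) :
    detConsRow A v = (of (vecCons v A)).det := by
  simp only [detConsRow, MultilinearMap.toLinearMap_apply, AlternatingMap.coe_multilinearMap, det]
  congr 1
  ext i j
  exact Fin.cases rfl (fun i => rfl) i

/-- Expand `det ([u; C] * [v | X])` along its first column, which is `(u ⬝ᵥ v, C *ᵥ v)`. -/
theorem dotProduct_mul_det_mul (C : Matrix (Fin n) (Fin (n + 1)) R)
    (X : Matrix (Fin (n + 1)) (Fin n) R) (u v : Fin (n + 1) → R) (hv : C *ᵥ v = 0) :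
    u ⬝ᵥ v * (C * X).det = (of (vecCons u C)).det * (of (vecCons v Xᵀ)).det := by
  rw [← det_transpose (of (vecCons v Xᵀ)), ← det_mul, det_succ_column_zero, Fin.sum_univ_succ]
  have hcol (i : Fin n) : (of (vecCons u C) * (of (vecCons v Xᵀ))ᵀ) i.succ 0 = 0 :=
    congr_fun hv i
  simp only [hcol, mul_zero, zero_mul, sum_const_zero, add_zero, Fin.val_zero, pow_zero,
    one_mul, Fin.succAbove_zero]
  rfl

end CommRing

variable {F : Type*} [Field F]

theorem exists_kernel_vector_of_linearIndependent {n : ℕ} {C : Matrix (Fin n) (Fin (n + 1)) F}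
    (hC : LinearIndependent F C.row) :
    ∃ u v : Fin (n + 1) → F, (of (vecCons u C)).det ≠ 0 ∧ C *ᵥ v = 0 ∧ u ⬝ᵥ v = 1 := by
  obtain ⟨u, hu⟩ : ∃ u, u ∉ Submodule.span F (Set.range C.row) := by
    by_contra! h
    have := finrank_span_eq_card hC
    rw [Submodule.eq_top_iff'.mpr h, finrank_top] at this
    simp at this
  have hdet : IsUnit (of (vecCons u C)).det :=
    (isUnit_iff_isUnit_det _).mp
      (linearIndependent_rows_iff_isUnit.mp (linearIndependent_finCons.mpr ⟨hC, hu⟩))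
  set v := (of (vecCons u C))⁻¹ *ᵥ Pi.single 0 1
  have hv : of (vecCons u C) *ᵥ v = Pi.single 0 1 := by
    rw [mulVec_mulVec, mul_nonsing_inv _ hdet, one_mulVec]
  refine ⟨u, v, hdet.ne_zero, ?_, ?_⟩
  · ext i
    exact (congr_fun hv i.succ).trans (Pi.single_eq_of_ne (Fin.succ_ne_zero i) _)
  · exact (congr_fun hv 0).trans (Pi.single_eq_same _ _)

variable {ι : Type*} [Fintype ι] [DecidableEq ι] {m : ℕ}

noncomputable def rowHyperplane (B : Matrix ι (Fin m) F) (v : ι → F) : Submodule F (Fin m → F) :=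
  (LinearMap.ker (dotProductEquiv F ι v)).map B.vecMulLinear

theorem rowHyperplane_le_range (B : Matrix ι (Fin m) F) (v : ι → F) :
    rowHyperplane B v ≤ LinearMap.range B.vecMulLinear :=
  LinearMap.map_le_range

theorem rowHyperplane_smul (B : Matrix ι (Fin m) F) (v : ι → F) {c : F} (hc : c ≠ 0) :
    rowHyperplane B (c • v) = rowHyperplane B v := by
  rw [rowHyperplane, map_smul, LinearMap.ker_smul _ _ hc, rowHyperplane]

theorem finrank_rowHyperplane_add_one {B : Matrix ι (Fin m) F} (hB : LinearIndependent F B.row)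
    {v : ι → F} (hv : v ≠ 0) : finrank F (rowHyperplane B v) + 1 = Fintype.card ι := by
  rw [rowHyperplane, ← (Submodule.equivMapOfInjective _ (vecMul_injective_iff.mpr hB) _).finrank_eq]
  exact finrank_ker_dotProductEquiv_add_one hv

theorem exists_eq_smul_of_rowHyperplane_le {B : Matrix ι (Fin m) F}
    (hB : LinearIndependent F B.row) {v w : ι → F} (h : rowHyperplane B w ≤ rowHyperplane B v) :
    ∃ c : F, v = c • w := by
  rw [rowHyperplane, rowHyperplane,
    Submodule.map_le_map_iff_of_injective (vecMul_injective_iff.mpr hB)] at h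
  obtain ⟨c, hc⟩ := Module.Dual.exists_eq_smul_of_ker_le h
  exact ⟨c, (dotProductEquiv F ι).injective (by rw [hc, map_smul])⟩

end Matrix

section GrassmannCode

open Matrix

variable {F : Type*} [Field F] {l m : ℕ}

theorem rowSpan_eq_range_vecMulLinear (N : Matrix (Fin l) (Fin m) F) :
    rowSpan F N = LinearMap.range N.vecMulLinear :=
  (range_vecMulLinear N).symm

theorem rowSpan_mul {k : ℕ} (C : Matrix (Fin l) (Fin k) F) (B : Matrix (Fin k) (Fin m) F) :
    rowSpan F (C * B) = (Submodule.span F (Set.range C.row)).map B.vecMulLinear := by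
  rw [Submodule.map_span, ← Set.range_comp]
  rfl

theorem exists_mul_eq_of_rowSpan_le {k : ℕ} {N : Matrix (Fin l) (Fin m) F}
    {B : Matrix (Fin k) (Fin m) F} (h : rowSpan F N ≤ rowSpan F B) :
    ∃ C : Matrix (Fin l) (Fin k) F, C * B = N := by
  rw [rowSpan_eq_range_vecMulLinear B] at h
  choose C hC using fun i => h (Submodule.subset_span ⟨i, rfl⟩ : N i ∈ rowSpan F N)
  exact ⟨of C, funext hC⟩

theorem linearIndependent_row_of_finrank_rowSpan {N : Matrix (Fin l) (Fin m) F}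
    (h : finrank F (rowSpan F N) = l) : LinearIndependent F N.row :=
  linearIndependent_iff_card_eq_finrank_span.mpr (by rw [Fintype.card_fin]; exact h.symm)

theorem exists_linearIndependent_rowSpan_eq {k : ℕ} {T : Submodule F (Fin m → F)}
    (hT : finrank F T = k) :
    ∃ B : Matrix (Fin k) (Fin m) F, LinearIndependent F B.row ∧ rowSpan F B = T := by
  let b := Module.finBasisOfFinrankEq F T hT
  refine ⟨of fun i => (b i : Fin m → F), b.linearIndependent.map' T.subtype T.ker_subtype, ?_⟩
  calc rowSpan F (of fun i => (b i : Fin m → F))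
      = (Submodule.span F (Set.range b)).map T.subtype := by
        rw [Submodule.map_span, ← Set.range_comp]
        rfl
    _ = T := by rw [b.span_eq, Submodule.map_subtype_top]

theorem rowHyperplane_eq_rowSpan_mul {C : Matrix (Fin l) (Fin (l + 1)) F}
    (hC : LinearIndependent F C.row) {v : Fin (l + 1) → F} (hv : v ≠ 0) (hCv : C *ᵥ v = 0)
    (B : Matrix (Fin (l + 1)) (Fin m) F) : rowHyperplane B v = rowSpan F (C * B) := by
  rw [rowSpan_mul, rowHyperplane]
  congr 1
  refine (Submodule.eq_of_le_of_finrank_eq ?_ ?_).symm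
  · rw [Submodule.span_le]
    rintro _ ⟨i, rfl⟩
    rw [SetLike.mem_coe, LinearMap.mem_ker, dotProductEquiv_apply_apply, dotProduct_comm]
    exact congr_fun hCv i
  · have := finrank_ker_dotProductEquiv_add_one hv
    rw [finrank_span_eq_card hC]
    simp only [Fintype.card_fin] at this ⊢
    omega

def pluckerCols (I : {s : Finset (Fin m) // s.card = l}) : Fin l → Fin m :=
  fun j => I.1.orderIsoOfFin I.2 j

def grEval (a : {s : Finset (Fin m) // s.card = l} → F) (N : Matrix (Fin l) (Fin m) F) : F :=
  ∑ I, a I * plucker F N I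

/-- The codeword on the top clique of `rowSpan F B`, as a form in the coordinate `v` of the
point `rowHyperplane B v`. -/
noncomputable def cliqueForm (B : Matrix (Fin (l + 1)) (Fin m) F)
    (a : {s : Finset (Fin m) // s.card = l} → F) : Module.Dual F (Fin (l + 1) → F) :=
  ∑ I, a I • detConsRow (B.submatrix id (pluckerCols I))ᵀ

theorem dotProduct_mul_grEval_mul (C : Matrix (Fin l) (Fin (l + 1)) F)
    (B : Matrix (Fin (l + 1)) (Fin m) F) (a : {s : Finset (Fin m) // s.card = l} → F)
    {u v : Fin (l + 1) → F} (hCv : C *ᵥ v = 0) :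
    u ⬝ᵥ v * grEval a (C * B) = (of (vecCons u C)).det * cliqueForm B a v := by
  simp only [grEval, cliqueForm, mul_sum, LinearMap.coe_sum, Finset.sum_apply,
    LinearMap.smul_apply, smul_eq_mul, detConsRow_apply]
  refine sum_congr rfl fun I _ => ?_
  have hI : plucker F (C * B) I = (C * B.submatrix id (pluckerCols I)).det := rfl
  rw [hI]
  linear_combination a I * dotProduct_mul_det_mul C (B.submatrix id (pluckerCols I)) u v hCv

theorem exists_rowHyperplane_eq_rowSpan (a : {s : Finset (Fin m) // s.card = l} → F)
    {B : Matrix (Fin (l + 1)) (Fin m) F} {N : Matrix (Fin l) (Fin m) F}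
    (hN : finrank F (rowSpan F N) = l) (hNB : rowSpan F N ≤ rowSpan F B) :
    ∃ v, rowHyperplane B v = rowSpan F N ∧ (grEval a N ≠ 0 ↔ cliqueForm B a v ≠ 0) := by
  obtain ⟨C, rfl⟩ := exists_mul_eq_of_rowSpan_le hNB
  have hC : LinearIndependent F C.row :=
    (linearIndependent_row_of_finrank_rowSpan hN).of_comp B.vecMulLinear
  obtain ⟨u, v, hdet, hCv, huv⟩ := exists_kernel_vector_of_linearIndependent hC
  have hv : v ≠ 0 := by
    rintro rfl
    simp at huv
  refine ⟨v, rowHyperplane_eq_rowSpan_mul hC hv hCv B, ?_⟩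
  have key := dotProduct_mul_grEval_mul C B a (u := u) hCv
  rw [huv, one_mul] at key
  rw [key]
  exact ⟨right_ne_zero_of_mul, mul_ne_zero hdet⟩

theorem rowHyperplane_injOn {B : Matrix (Fin (l + 1)) (Fin m) F} (hB : LinearIndependent F B.row)
    (f : Module.Dual F (Fin (l + 1) → F)) : Set.InjOn (rowHyperplane B) {v | f v = 1} := by
  intro v hv w hw h
  obtain ⟨c, rfl⟩ := exists_eq_smul_of_rowHyperplane_le hB h.ge
  simp only [Set.mem_ofPred_eq, map_smul, smul_eq_mul] at hv hw
  rw [hw, mul_one] at hv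
  rw [hv, one_smul]

theorem grSupport_inter_eq_image (M : Submodule F (Fin m → F) → Matrix (Fin l) (Fin m) F)
    (hM : ∀ W : Submodule F (Fin m → F), finrank F W = l → rowSpan F (M W) = W)
    (a : {s : Finset (Fin m) // s.card = l} → F) {B : Matrix (Fin (l + 1)) (Fin m) F}
    (hB : LinearIndependent F B.row) :
    grSupport F M a ∩ {W | W ≤ rowSpan F B} = rowHyperplane B '' {v | cliqueForm B a v = 1} := by
  have key (W : Submodule F (Fin m → F)) (hW : finrank F W = l) (hWB : W ≤ rowSpan F B) :
      ∃ v, rowHyperplane B v = W ∧ (grEval a (M W) ≠ 0 ↔ cliqueForm B a v ≠ 0) := by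
    have hN := hM W hW
    obtain ⟨v, hv, hiff⟩ := exists_rowHyperplane_eq_rowSpan a (N := M W) (hN.symm ▸ hW)
      (hN.symm ▸ hWB)
    exact ⟨v, hv.trans hN, hiff⟩
  ext W
  constructor
  · rintro ⟨⟨hW, hWne⟩, hWB⟩
    obtain ⟨v, rfl, hv⟩ := key W hW hWB
    have hLv := hv.mp hWne
    exact ⟨(cliqueForm B a v)⁻¹ • v, by simp [hLv], rowHyperplane_smul B v (inv_ne_zero hLv)⟩
  · rintro ⟨v, hv, rfl⟩
    have hv0 : v ≠ 0 := by
      rintro rfl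
      simp at hv
    have hW : finrank F (rowHyperplane B v) = l := by
      have := finrank_rowHyperplane_add_one hB hv0
      simp only [Fintype.card_fin] at this
      omega
    have hWB : rowHyperplane B v ≤ rowSpan F B :=
      rowSpan_eq_range_vecMulLinear B ▸ rowHyperplane_le_range B v
    obtain ⟨w, hw, hiff⟩ := key _ hW hWB
    obtain ⟨c, rfl⟩ := exists_eq_smul_of_rowHyperplane_le hB hw.le
    refine ⟨⟨hW, hiff.mpr fun h => ?_⟩, hWB⟩
    simp [h] at hv

end GrassmannCode

theorem top_clique_meets_support_general (F : Type*) [Field F] [Fintype F] {l m : ℕ}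
    (M : Submodule F (Fin m → F) → Matrix (Fin l) (Fin m) F)
    (hM : ∀ W : Submodule F (Fin m → F), finrank F W = l → rowSpan F (M W) = W)
    (a : {s : Finset (Fin m) // s.card = l} → F)
    (T : Submodule F (Fin m → F)) (hT : finrank F T = l + 1) :
    (grSupport F M a ∩ {W | W ≤ T}).ncard = 0 ∨
      (grSupport F M a ∩ {W | W ≤ T}).ncard = Fintype.card F ^ l := by
  obtain ⟨B, hB, rfl⟩ := exists_linearIndependent_rowSpan_eq hT
  rw [grSupport_inter_eq_image M hM a hB, (rowHyperplane_injOn hB _).ncard_image]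
  by_cases hL : cliqueForm B a = 0
  · left
    simp [hL]
  · exact Or.inr (Module.Dual.ncard_setOf_apply_eq_one (finrank_fin_fun F) hL)

/-- for a nonzero codeword of the Grassmann code `C(ℓ,m)` with support `Y`,
every top clique `⟨T] = { W ∈ G(ℓ,m) : W ≤ T }`, `T ∈ G(ℓ+1,m)`, meets `Y` in exactly `0`
or exactly `q^ℓ` points. -/
theorem top_clique_meets_support (F : Type*) [Field F] [Fintype F] {l m : ℕ}
    (hl : 1 ≤ l) (hm : l ≤ m)
    (M : Submodule F (Fin m → F) → Matrix (Fin l) (Fin m) F)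
    (hM : ∀ W : Submodule F (Fin m → F), finrank F W = l → rowSpan F (M W) = W)
    (a : {s : Finset (Fin m) // s.card = l} → F)
    (hnz : (grSupport F M a).Nonempty)
    (T : Submodule F (Fin m → F)) (hT : finrank F T = l + 1) :
    (grSupport F M a ∩ {W | W ≤ T}).ncard = 0 ∨
      (grSupport F M a ∩ {W | W ≤ T}).ncard = Fintype.card F ^ l :=
  top_clique_meets_support_general F M hM a T hT
end
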